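/- arXiv:1306.4164 — 5 statements merged into one kernel-verified Lean document; each statement's English description precedes it below -/
import Mathlib

section
/- For every odd integer n ≥ 5, it holds that (3/2)(n² − n + 2) − 4n·H_{(n−1)/2} > 0, where H_k = ∑_{i=1}^{k} 1/i is the k-th harmonic number. -/
open Finset SimpleGraph

/-- Degree of a vertex (number of neighbors). -/
noncomputable def deg {V : Type*} [Fintype V] (G : SimpleGraph V) (v : V) : ℕ :=
  Nat.card {w // G.Adj v w}

open scoped Classical in
/-- Additively weighted Harary index: sum over unordered pairs of distinct
vertices of (deg u + deg v) / d(u,v). -/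
noncomputable def HA {V : Type*} [Fintype V] (G : SimpleGraph V) : ℝ :=
  (1/2) * ∑ u : V, ∑ v : V, if u = v then 0 else
    ((deg G u + deg G v : ℕ) : ℝ) / (G.dist u v)

/-- A unicyclic graph: connected with as many edges as vertices. -/
def Unicyclic {V : Type*} [Fintype V] (G : SimpleGraph V) : Prop :=
  G.Connected ∧ Nat.card G.edgeSet = Fintype.card V

/-- k-th harmonicNum number. -/
noncomputable def harmonicNum (k : ℕ) : ℝ := ∑ i ∈ Finset.range k, (1 : ℝ) / (i + 1)

/-- CS_{3,n-3}: a triangle on vertices 0,1,2 with n-3 leaves attached to vertex 0. -/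
def cycleStar3 (n : ℕ) : SimpleGraph (Fin n) :=
  SimpleGraph.fromRel (fun i j => ((i : ℕ) < 3 ∧ (j : ℕ) < 3) ∨ ((i : ℕ) = 0 ∧ 3 ≤ (j : ℕ)))

/-- CP_{k,n-k}: cycle 0,...,k-1 with the path k,k+1,...,n-1 attached to vertex 0
(for k = n this is just the cycle C_n). -/
def cyclePath (n k : ℕ) : SimpleGraph (Fin n) :=
  SimpleGraph.fromRel (fun i j =>
    ((i : ℕ) < k ∧ (j : ℕ) < k ∧ ((j : ℕ) = (i : ℕ) + 1 ∨ ((i : ℕ) = 0 ∧ (j : ℕ) = k - 1)))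
    ∨ ((i : ℕ) = 0 ∧ (j : ℕ) = k)
    ∨ (k ≤ (i : ℕ) ∧ (j : ℕ) = (i : ℕ) + 1))

/-- A vertex lies on a cycle of G. -/
def OnCycle {V : Type*} (G : SimpleGraph V) (v : V) : Prop :=
  ∃ p : G.Walk v v, p.IsCycle

/-- Cycle-star graph: unicyclic, and every vertex of degree ≥ 2 lies on the cycle
(equivalently, every non-cycle vertex is a leaf attached to a cycle vertex). -/
def IsCycleStar {V : Type*} [Fintype V] (G : SimpleGraph V) : Prop :=
  Unicyclic G ∧ ∀ v, 2 ≤ deg G v → OnCycle G v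

/-- Cycle-path graph: unicyclic, cycle vertices have degree ≤ 3 and non-cycle
vertices have degree ≤ 2 (at most one pendant path per cycle vertex). -/
def IsCyclePath {V : Type*} [Fintype V] (G : SimpleGraph V) : Prop :=
  Unicyclic G ∧ ∀ v, (OnCycle G v → deg G v ≤ 3) ∧ (¬ OnCycle G v → deg G v ≤ 2)

/-- Length of the unique cycle of a unicyclic graph: number of vertices on a cycle. -/
noncomputable def cycleLength {V : Type*} [Fintype V] (G : SimpleGraph V) : ℕ :=
  Nat.card {v // OnCycle G v}

/-- Value of H_A(CP_{3,n-3}). -/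
noncomputable def CPval (n : ℕ) : ℝ :=
  4 * ∑ i ∈ Finset.range (n - 2), harmonicNum (n - i - 2)
    + harmonicNum (n - 3) + 3 * harmonicNum (n - 2) + (6 * (n : ℝ) - 13) / ((n : ℝ) - 2)

theorem harmonicNum_le_half_succ {k : ℕ} (hk : 1 ≤ k) : harmonicNum k ≤ ((k : ℝ) + 1) / 2 := by
  induction k, hk using Nat.le_induction with
  | base => norm_num [harmonicNum]
  | succ m hm ih =>
    have hm' : (1 : ℝ) ≤ m := by exact_mod_cast hm
    have hterm : (1 : ℝ) / (m + 1) ≤ 1 / 2 := by gcongr; linarith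
    rw [harmonicNum, Finset.sum_range_succ, ← harmonicNum]
    push_cast
    linarith

theorem stmt0 (n : ℕ) (hn : 5 ≤ n) (hodd : Odd n) :
    (3 / 2 : ℝ) * ((n : ℝ) ^ 2 - n + 2) - 4 * n * harmonicNum ((n - 1) / 2) > 0 := by
  obtain ⟨k, rfl⟩ := hodd
  have hhalf : (2 * k + 1 - 1) / 2 = k := by omega
  have hk : (2 : ℝ) ≤ k := by exact_mod_cast (by omega : 2 ≤ k)
  rw [hhalf, gt_iff_lt, sub_pos]
  push_cast
  -- with n = 2k + 1 the gap between the two sides is (2k - 1)(k - 1)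
  calc 4 * (2 * k + 1 : ℝ) * harmonicNum k
      ≤ 4 * (2 * k + 1) * ((k + 1) / 2) := by gcongr; exact harmonicNum_le_half_succ (by omega)
    _ < 3 / 2 * ((2 * k + 1) ^ 2 - (2 * k + 1) + 2) := by nlinarith
end

section
/- The additively weighted Harary index of the cycle-star graph CS_{3,n−3} equals (3/2)(n² − n + 2) for every integer n ≥ 3. -/
open Finset SimpleGraph

/-!
Vertex 0 of CS_{3,n-3} is adjacent to every other vertex, so the graph has diameter at most 2
and `1 / d(u,v) = (1 + [u ~ v]) / 2` for `u ≠ v`. Summing `(deg u + deg v) / d(u,v)` therefore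
gives half the plain degree sum over pairs, `(|V| - 1) ∑ deg`, plus half the sum over adjacent
pairs, which is `∑ deg²` because each vertex `u` occurs in `deg u` of them. For CS_{3,n-3} the
degrees are `n - 1, 2, 2, 1, …, 1`, so `∑ deg = 2n` and `∑ deg² = n² - n + 6`.
-/

section DiameterTwo

variable {V : Type*} (G : SimpleGraph V)

lemma ediam_le_two_of_forall_adj {c : V} (hc : ∀ v, c ≠ v → G.Adj c v) : G.ediam ≤ 2 :=
  calc G.ediam ≤ 2 * G.eccent c := G.ediam_le_two_mul_eccent c
    _ ≤ 2 * 1 := by gcongr; exact (G.eccent_le_one_iff c).2 hc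
    _ = 2 := mul_one 2

variable {G} in
lemma dist_eq_two_of_ediam_le_two (h : G.ediam ≤ 2) {u v : V} (hne : u ≠ v)
    (hadj : ¬ G.Adj u v) : G.dist u v = 2 := by
  have hle : G.edist u v ≤ 2 := edist_le_ediam.trans h
  have hreach : G.Reachable u v := reachable_of_edist_ne_top (ne_top_of_le_ne_top (by decide) hle)
  have hgt : 1 < G.dist u v := hreach.one_lt_dist_of_ne_of_not_adj hne hadj
  have hle' : G.dist u v ≤ 2 := by exact_mod_cast hreach.coe_dist_eq_edist ▸ hle
  omega

variable [Fintype V]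

open scoped Classical

lemma deg_eq_card_filter (v : V) : deg G v = #{w | G.Adj v w} := by
  rw [deg, Nat.card_eq_fintype_card, Fintype.card_subtype]

lemma sum_sum_adj_deg_add_deg :
    ∑ u, ∑ v, (if G.Adj u v then (deg G u + deg G v : ℝ) else 0) =
      2 * ∑ u, (deg G u : ℝ) ^ 2 := by
  have hrow : ∀ u, ∑ v, (if G.Adj u v then (deg G u : ℝ) else 0) = (deg G u : ℝ) ^ 2 := by
    intro u
    rw [← sum_filter, sum_const, nsmul_eq_mul, ← deg_eq_card_filter, sq]
  have hcol : ∑ u, ∑ v, (if G.Adj u v then (deg G v : ℝ) else 0) = ∑ v, (deg G v : ℝ) ^ 2 := by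
    rw [sum_comm]
    simp_rw [G.adj_comm _ _]
    exact sum_congr rfl fun v _ => hrow v
  simp only [ite_add_zero, sum_add_distrib, hrow, hcol]
  ring

theorem HA_eq_of_ediam_le_two (h : G.ediam ≤ 2) :
    HA G = (((Fintype.card V : ℝ) - 1) * ∑ v, (deg G v : ℝ) + ∑ v, (deg G v : ℝ) ^ 2) / 2 := by
  have hterm : ∀ u v, (if u = v then 0 else ((deg G u + deg G v : ℕ) : ℝ) / G.dist u v) =
      ((deg G u : ℝ) + deg G v) / 2 + (if G.Adj u v then (deg G u + deg G v : ℝ) else 0) / 2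
        - if u = v then (deg G u : ℝ) else 0 := by
    intro u v
    rcases eq_or_ne u v with rfl | hne
    · simp
    by_cases hadj : G.Adj u v
    · simp [hne, hadj, dist_eq_one_iff_adj.2 hadj]
    · simp [hne, hadj, dist_eq_two_of_ediam_le_two h hne hadj]
  rw [HA]
  simp only [hterm, sum_sub_distrib, sum_add_distrib, ← sum_div, sum_sum_adj_deg_add_deg,
    sum_ite_eq, mem_univ, if_true, sum_const, card_univ, nsmul_eq_mul, ← mul_sum]
  ring

end DiameterTwo

section CycleStar

variable {n : ℕ}

lemma cycleStar3_adj_iff (u v : Fin n) : (cycleStar3 n).Adj u v ↔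
    u ≠ v ∧ ((u : ℕ) = 0 ∨ (v : ℕ) = 0 ∨ ((u : ℕ) < 3 ∧ (v : ℕ) < 3)) := by
  simp only [cycleStar3, fromRel_adj]
  exact and_congr_right fun _ => by omega

lemma cycleStar3_ediam_le_two (hn : 0 < n) : (cycleStar3 n).ediam ≤ 2 :=
  ediam_le_two_of_forall_adj _ (c := ⟨0, hn⟩) fun _ hv => (cycleStar3_adj_iff _ _).2 ⟨hv, .inl rfl⟩

open scoped Classical in
lemma deg_cycleStar3 (hn : 3 ≤ n) (v : Fin n) :
    deg (cycleStar3 n) v = if (v : ℕ) = 0 then n - 1 else if (v : ℕ) < 3 then 2 else 1 := by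
  rw [deg_eq_card_filter]
  split_ifs with h0 h3
  · have : ({w | (cycleStar3 n).Adj v w} : Finset (Fin n)) = univ.erase v := by
      ext w; simp [cycleStar3_adj_iff, h0, eq_comm]
    rw [this, card_erase_of_mem (mem_univ v), card_univ, Fintype.card_fin]
  · have : ({w | (cycleStar3 n).Adj v w} : Finset (Fin n)) =
        {⟨0, by omega⟩, ⟨3 - v, by omega⟩} := by
      ext w; simp [cycleStar3_adj_iff, Fin.ext_iff]; omega
    rw [this, card_pair (by simp [Fin.ext_iff]; omega)]
  · have : ({w | (cycleStar3 n).Adj v w} : Finset (Fin n)) = {⟨0, by omega⟩} := by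
      ext w; simp [cycleStar3_adj_iff, Fin.ext_iff]; omega
    rw [this, card_singleton]

lemma sum_deg_cycleStar3 (hn : 3 ≤ n) : ∑ v, (deg (cycleStar3 n) v : ℝ) = 2 * n := by
  obtain ⟨m, rfl⟩ := Nat.exists_eq_add_of_le' hn
  simp [Fin.sum_univ_succ, deg_cycleStar3 hn, add_assoc]
  ring

lemma sum_deg_sq_cycleStar3 (hn : 3 ≤ n) :
    ∑ v, (deg (cycleStar3 n) v : ℝ) ^ 2 = (n : ℝ) ^ 2 - n + 6 := by
  obtain ⟨m, rfl⟩ := Nat.exists_eq_add_of_le' hn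
  simp [Fin.sum_univ_succ, deg_cycleStar3 hn, add_assoc]
  ring

end CycleStar

theorem stmt2 (n : ℕ) (hn : 3 ≤ n) :
    HA (cycleStar3 n) = (3 / 2 : ℝ) * ((n : ℝ) ^ 2 - n + 2) := by
  rw [HA_eq_of_ediam_le_two _ (cycleStar3_ediam_le_two (by omega)), Fintype.card_fin,
    sum_deg_cycleStar3 hn, sum_deg_sq_cycleStar3 hn]
  ring
end

section
/- The additively weighted Harary index of the cycle-path graph CP_{3,n−3} equals 4·∑_{i=1}^{n−2} H_{n−i−1} + H_{n−3} + 3·H_{n−2} + (6n−13)/(n−2) for every integer n ≥ 4, where H_k denotes the k-th harmonic number. -/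
open Finset SimpleGraph

/-!
Give the triangle vertices `1, 2` level `1`, vertex `0` level `2` and the path vertex `k` level
`k`. Levels change by at most one along an edge and are monotone along the obvious walks, so
distinct vertices are at distance `max 1 |level difference|`. Since
`H_A(G) = ∑ᵤ deg u · ∑ᵥ 1 / d(u, v)` and `deg u = 2 + [u = 0] - [u = n - 1]`, the index is twice
the total sum of reciprocal distances, plus the row sum of vertex `0`, minus that of the pendant
vertex. The total sum grows by twice the row sum of the new vertex when the path is extended,
which gives it by induction on `n`.
-/

lemma deg_eq_card_of_adj_iff {V : Type*} [Fintype V] {G : SimpleGraph V} {v : V} (s : Finset V)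
    (h : ∀ w, G.Adj v w ↔ w ∈ s) : deg G v = s.card := by
  rw [deg, ← Nat.card_eq_finsetCard]
  exact Nat.card_congr (Equiv.subtypeEquivRight h)

open scoped Classical in
/-- Since `1 / 0 = 0` in `ℝ` and `G.dist u u = 0`, the summand `(G.dist u v)⁻¹` vanishes on the
diagonal. -/
theorem HA_eq_sum_deg_mul_sum_inv_dist {V : Type*} [Fintype V] (G : SimpleGraph V) :
    HA G = ∑ u, (deg G u : ℝ) * ∑ v, ((G.dist u v : ℕ) : ℝ)⁻¹ := by
  have hsplit : ∀ u v, (if u = v then (0 : ℝ) else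
      ((deg G u + deg G v : ℕ) : ℝ) / (G.dist u v)) =
      (deg G u : ℝ) * ((G.dist u v : ℕ) : ℝ)⁻¹ + (deg G v : ℝ) * ((G.dist v u : ℕ) : ℝ)⁻¹ := by
    intro u v
    split_ifs with huv
    · simp [huv]
    · rw [dist_comm]; push_cast; ring
  simp only [HA, hsplit, sum_add_distrib]
  rw [sum_comm (f := fun u v => (deg G v : ℝ) * ((G.dist v u : ℕ) : ℝ)⁻¹)]
  simp only [mul_sum]
  ring

lemma harmonicNum_succ (k : ℕ) : harmonicNum (k + 1) = harmonicNum k + 1 / ((k : ℝ) + 1) :=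
  sum_range_succ _ _

lemma sum_range_harmonicNum_sub (N : ℕ) :
    ∑ i ∈ range N, harmonicNum (N - i) = ∑ k ∈ range (N + 1), harmonicNum k := by
  rw [sum_range_succ', harmonicNum, sum_range_zero, add_zero,
    ← sum_range_reflect (fun k => harmonicNum (k + 1))]
  refine sum_congr rfl fun i hi => ?_
  rw [mem_range] at hi
  rw [show N - 1 - i + 1 = N - i by omega]

lemma Finset.sum_range_succ_sum_range_succ_of_symm {M : Type*} [AddCommMonoid M]
    {f : ℕ → ℕ → M} (hf : ∀ i j, f i j = f j i) (n : ℕ) :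
    ∑ i ∈ range (n + 1), ∑ j ∈ range (n + 1), f i j =
      ∑ i ∈ range n, ∑ j ∈ range n, f i j + 2 • ∑ j ∈ range n, f n j + f n n := by
  simp only [sum_range_succ, sum_add_distrib, hf _ n, two_nsmul]
  abel

namespace SimpleGraph

variable {V : Type*} {G : SimpleGraph V} {f : V → ℤ}

theorem Walk.natAbs_sub_le_length (hf : ∀ ⦃x y⦄, G.Adj x y → (f x - f y).natAbs ≤ 1)
    {u v : V} (p : G.Walk u v) : (f u - f v).natAbs ≤ p.length := by
  induction p with
  | nil => simp
  | cons h _ ih => have := hf h; rw [length_cons]; omega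

theorem dist_eq_natAbs_sub_of_walk (hf : ∀ ⦃x y⦄, G.Adj x y → (f x - f y).natAbs ≤ 1)
    {u v : V} (p : G.Walk u v) (hp : p.length ≤ (f u - f v).natAbs) :
    G.dist u v = (f u - f v).natAbs := by
  refine le_antisymm ((dist_le p).trans hp) ?_
  obtain ⟨q, hq⟩ := p.reachable.exists_walk_length_eq_dist
  exact hq ▸ q.natAbs_sub_le_length hf

end SimpleGraph

section CyclePathThree

variable {n : ℕ}

lemma cyclePath_three_adj_iff {u v : Fin n} :
    (cyclePath n 3).Adj u v ↔ (u : ℕ) ≠ v ∧ (((u : ℕ) < 3 ∧ (v : ℕ) < 3) ∨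
      ((u : ℕ) = 0 ∧ (v : ℕ) = 3) ∨ ((u : ℕ) = 3 ∧ (v : ℕ) = 0) ∨
      (3 ≤ (u : ℕ) ∧ (v : ℕ) = u + 1) ∨ (3 ≤ (v : ℕ) ∧ (u : ℕ) = v + 1)) := by
  simp only [cyclePath, fromRel_adj, ne_eq, Fin.ext_iff]
  omega

/-- Distances in `cyclePath n 3` are differences of these levels, except between `1` and `2`. -/
def cp3Height (u : ℕ) : ℤ := if u = 0 then 2 else if u < 3 then 1 else u

def cp3Dist (u v : ℕ) : ℕ := if u = v then 0 else max 1 (cp3Height u - cp3Height v).natAbs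

lemma cp3Dist_self (u : ℕ) : cp3Dist u u = 0 := if_pos rfl

lemma cp3Dist_comm (u v : ℕ) : cp3Dist u v = cp3Dist v u := by
  unfold cp3Dist
  split_ifs <;> omega

lemma natAbs_cp3Height_sub_le_one ⦃u v : Fin n⦄ (h : (cyclePath n 3).Adj u v) :
    (cp3Height u - cp3Height v).natAbs ≤ 1 := by
  rw [cyclePath_three_adj_iff] at h
  unfold cp3Height
  split_ifs <;> omega

lemma exists_walk_cyclePath_three {a b : ℕ} (ha : a < n) (hb : b < n) (hab : a ≤ b)
    (hb3 : 3 ≤ b) : ∃ p : (cyclePath n 3).Walk ⟨a, ha⟩ ⟨b, hb⟩,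
      p.length = (cp3Height a - cp3Height b).natAbs := by
  have adj : ∀ (x y : ℕ) (hx : x < n) (hy : y < n), (x ≠ y ∧ ((x < 3 ∧ y < 3) ∨ (x = 0 ∧ y = 3) ∨
      (3 ≤ x ∧ y = x + 1))) → (cyclePath n 3).Adj ⟨x, hx⟩ ⟨y, hy⟩ := fun _ _ _ _ h => by
    rw [cyclePath_three_adj_iff]; simp only; omega
  induction b, hb3 using Nat.le_induction generalizing a with
  | base =>
    obtain rfl | ha12 | rfl : a = 0 ∨ (a = 1 ∨ a = 2) ∨ a = 3 := by omega
    · exact ⟨.cons (adj 0 3 ha hb (by omega)) .nil, by simp [cp3Height]⟩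
    · exact ⟨.cons (adj a 0 ha (by omega) (by omega))
        (.cons (adj 0 3 (by omega) hb (by omega)) .nil),
        by rcases ha12 with rfl | rfl <;> simp [cp3Height]⟩
    · exact ⟨.nil, by simp⟩
  | succ b hb3 ih =>
    rcases hab.lt_or_eq with hab | rfl
    · obtain ⟨p, hp⟩ := ih ha (by omega) (by omega)
      refine ⟨p.concat (adj b (b + 1) (by omega) hb (by omega)), ?_⟩
      rw [Walk.length_concat, hp]
      unfold cp3Height
      grind
    · exact ⟨.nil, by simp⟩

theorem dist_cyclePath_three (u v : Fin n) : (cyclePath n 3).dist u v = cp3Dist u v := by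
  wlog huv : (u : ℕ) ≤ v generalizing u v
  · rw [dist_comm, cp3Dist_comm]; exact this v u (by omega)
  rcases huv.eq_or_lt with huv | huv
  · rw [Fin.ext huv, dist_self, cp3Dist_self]
  by_cases hv : (v : ℕ) < 3
  · have hadj : (cyclePath n 3).Adj u v := by rw [cyclePath_three_adj_iff]; omega
    rw [dist_eq_one_iff_adj.mpr hadj]
    unfold cp3Dist cp3Height
    split_ifs <;> omega
  · obtain ⟨p, hp⟩ := exists_walk_cyclePath_three u.isLt v.isLt huv.le (by omega)
    simp only [Fin.eta] at p hp
    rw [dist_eq_natAbs_sub_of_walk (f := fun w : Fin n => cp3Height w)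
      natAbs_cp3Height_sub_le_one p hp.le]
    unfold cp3Dist cp3Height
    split_ifs <;> omega

theorem deg_cyclePath_three (hn : 4 ≤ n) (v : Fin n) :
    deg (cyclePath n 3) v = if (v : ℕ) = 0 then 3 else if (v : ℕ) = n - 1 then 1 else 2 := by
  obtain ⟨v, hv⟩ := v
  have of_nbrs : ∀ (s : Finset (Fin n)) (k : ℕ), (∀ w : Fin n, (w : ℕ) ≠ v ∧
      ((v < 3 ∧ (w : ℕ) < 3) ∨ (v = 0 ∧ (w : ℕ) = 3) ∨ (v = 3 ∧ (w : ℕ) = 0) ∨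
        (3 ≤ v ∧ (w : ℕ) = v + 1) ∨ (3 ≤ (w : ℕ) ∧ v = w + 1)) ↔ w ∈ s) → s.card = k →
      (if v = 0 then 3 else if v = n - 1 then 1 else 2) = k →
      deg (cyclePath n 3) ⟨v, hv⟩ = if v = 0 then 3 else if v = n - 1 then 1 else 2 :=
    fun s k hs hcard hk => hk ▸ hcard ▸ deg_eq_card_of_adj_iff s fun w => by
      rw [cyclePath_three_adj_iff, ← hs]; simp only; omega
  rcases (by omega : v = 0 ∨ v = 1 ∨ v = 2 ∨ (v = 3 ∧ v < n - 1) ∨ (4 ≤ v ∧ v < n - 1) ∨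
    (v = 3 ∧ v = n - 1) ∨ (4 ≤ v ∧ v = n - 1)) with h | h | h | h | h | h | h
  · exact of_nbrs {⟨1, by omega⟩, ⟨2, by omega⟩, ⟨3, by omega⟩} 3
      (by simp [Fin.ext_iff]; omega) (by simp [Fin.ext_iff]) (by simp [h])
  · exact of_nbrs {⟨0, by omega⟩, ⟨2, by omega⟩} 2
      (by simp [Fin.ext_iff]; omega) (by simp [Fin.ext_iff]) (by split_ifs <;> omega)
  · exact of_nbrs {⟨0, by omega⟩, ⟨1, by omega⟩} 2
      (by simp [Fin.ext_iff]; omega) (by simp [Fin.ext_iff]) (by split_ifs <;> omega)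
  · exact of_nbrs {⟨0, by omega⟩, ⟨4, by omega⟩} 2
      (by simp [Fin.ext_iff]; omega) (by simp [Fin.ext_iff]) (by split_ifs <;> omega)
  · exact of_nbrs {⟨v - 1, by omega⟩, ⟨v + 1, by omega⟩} 2
      (by simp [Fin.ext_iff]; omega) (by rw [card_pair]; simp [Fin.ext_iff])
      (by split_ifs <;> omega)
  · exact of_nbrs {⟨0, by omega⟩} 1
      (by simp [Fin.ext_iff]; omega) (card_singleton _) (by split_ifs <;> omega)
  · exact of_nbrs {⟨v - 1, by omega⟩} 1
      (by simp [Fin.ext_iff]; omega) (card_singleton _) (by split_ifs <;> omega)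

lemma sum_inv_cp3Dist_zero (m : ℕ) :
    ∑ v ∈ range (m + 3), (cp3Dist 0 v : ℝ)⁻¹ = 2 + harmonicNum m := by
  induction m with
  | zero => norm_num [sum_range_succ, cp3Dist, cp3Height, harmonicNum]
  | succ m ih =>
    rw [show m + 1 + 3 = m + 3 + 1 from rfl, sum_range_succ, ih, harmonicNum_succ,
      show cp3Dist 0 (m + 3) = m + 1 by unfold cp3Dist cp3Height; grind]
    push_cast; ring

lemma sum_inv_cp3Dist_top (m : ℕ) :
    ∑ v ∈ range (m + 3), (cp3Dist (m + 3) v : ℝ)⁻¹ = harmonicNum (m + 1) + 2 / ((m : ℝ) + 2) := by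
  rw [← sum_range_reflect, sum_range_succ, sum_range_succ, sum_range_succ, harmonicNum_succ,
    harmonicNum]
  have hpath : ∀ i ∈ range m, (cp3Dist (m + 3) (m + 3 - 1 - i) : ℝ)⁻¹ = 1 / ((i : ℝ) + 1) := by
    intro i hi
    rw [mem_range] at hi
    rw [show cp3Dist (m + 3) (m + 3 - 1 - i) = i + 1 by unfold cp3Dist cp3Height; grind]
    push_cast; ring
  rw [sum_congr rfl hpath,
    show cp3Dist (m + 3) (m + 3 - 1 - m) = m + 2 by unfold cp3Dist cp3Height; grind,
    show cp3Dist (m + 3) (m + 3 - 1 - (m + 1)) = m + 2 by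
      unfold cp3Dist cp3Height; grind,
    show cp3Dist (m + 3) (m + 3 - 1 - (m + 2)) = m + 1 by
      unfold cp3Dist cp3Height; grind]
  push_cast; ring

lemma sum_sum_inv_cp3Dist (m : ℕ) :
    ∑ u ∈ range (m + 3), ∑ v ∈ range (m + 3), (cp3Dist u v : ℝ)⁻¹ =
      2 * (1 + harmonicNum (m + 1) + ∑ k ∈ range (m + 2), harmonicNum k) := by
  induction m with
  | zero => norm_num [sum_range_succ, cp3Dist, cp3Height, harmonicNum]
  | succ m ih =>
    rw [show m + 1 + 3 = m + 3 + 1 from rfl,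
      sum_range_succ_sum_range_succ_of_symm (fun u v => by rw [cp3Dist_comm]), ih,
      sum_inv_cp3Dist_top, sum_range_succ _ (m + 2), harmonicNum_succ (m + 1), cp3Dist_self,
      Nat.cast_zero, inv_zero]
    push_cast; ring

theorem HA_cyclePath_three (hn : 4 ≤ n) :
    HA (cyclePath n 3) = 2 * ∑ u ∈ range n, ∑ v ∈ range n, (cp3Dist u v : ℝ)⁻¹ +
      ∑ v ∈ range n, (cp3Dist 0 v : ℝ)⁻¹ - ∑ v ∈ range n, (cp3Dist (n - 1) v : ℝ)⁻¹ := by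
  set row : ℕ → ℝ := fun u => ∑ v ∈ range n, (cp3Dist u v : ℝ)⁻¹
  have hdeg : ∀ u ∈ range n,
      ((if u = 0 then 3 else if u = n - 1 then 1 else 2 : ℕ) : ℝ) * row u =
        2 * row u + (if u = 0 then row u else 0) - (if u = n - 1 then row u else 0) := by
    intro u _
    split_ifs <;> first | omega | (push_cast; ring)
  have hrow : ∀ u : ℕ, ∑ v : Fin n, (cp3Dist u v : ℝ)⁻¹ = row u :=
    fun u => Fin.sum_univ_eq_sum_range (fun v => (cp3Dist u v : ℝ)⁻¹) n
  rw [HA_eq_sum_deg_mul_sum_inv_dist]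
  simp only [deg_cyclePath_three hn, dist_cyclePath_three, hrow]
  rw [Fin.sum_univ_eq_sum_range
      (fun u => ((if u = 0 then 3 else if u = n - 1 then 1 else 2 : ℕ) : ℝ) * row u),
    sum_congr rfl hdeg, sum_sub_distrib, sum_add_distrib, ← mul_sum, sum_ite_eq', sum_ite_eq',
    if_pos (by simp; omega), if_pos (by simp; omega)]

end CyclePathThree

theorem stmt3 (n : ℕ) (hn : 4 ≤ n) :
    HA (cyclePath n 3) =
      4 * ∑ i ∈ Finset.range (n - 2), harmonicNum (n - i - 2)
        + harmonicNum (n - 3) + 3 * harmonicNum (n - 2) + (6 * (n : ℝ) - 13) / ((n : ℝ) - 2) := by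
  obtain ⟨m, rfl⟩ : ∃ m, n = m + 4 := ⟨n - 4, by omega⟩
  have hlast : ∑ v ∈ range (m + 4), (cp3Dist (m + 3) v : ℝ)⁻¹ =
      harmonicNum (m + 1) + 2 / ((m : ℝ) + 2) := by
    rw [sum_range_succ, sum_inv_cp3Dist_top, cp3Dist_self, Nat.cast_zero, inv_zero, add_zero]
  rw [HA_cyclePath_three hn, show m + 4 - 1 = m + 3 from rfl, sum_sum_inv_cp3Dist (m + 1),
    sum_inv_cp3Dist_zero (m + 1), hlast, show m + 4 - 2 = m + 2 from rfl,
    show m + 4 - 3 = m + 1 from rfl,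
    sum_congr rfl fun i _ => congrArg harmonicNum (by omega : m + 4 - i - 2 = m + 2 - i),
    sum_range_harmonicNum_sub, show m + 1 + 2 = m + 2 + 1 from rfl, harmonicNum_succ (m + 1)]
  rw [show ((m + 4 : ℕ) : ℝ) - 2 = (m : ℝ) + 2 by push_cast; ring]
  field_simp
  push_cast
  ring
end

section
/- For every odd integer n ≥ 3, the additively weighted Harary index of the cycle C_n equals 4n·H_{(n−1)/2}, where H_k is the k-th harmonic number. -/
open Finset SimpleGraph

/-!
Every vertex of `C_n` has degree `2`, so `H_A(C_n)` is `2` times the sum of `1 / d(u, v)` over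
ordered pairs. The cycle is vertex-transitive and `d(u, u + w) = min(w, n - w)`; for `n = 2m + 1`
the nonzero values of this minimum are `1, …, m`, each taken twice, so every vertex contributes
`2 H_m` and the total is `2 · n · 2 H_m = 4n H_m`.
-/

open Fin.NatCast Fin.CommRing

lemma deg_eq_degree {V : Type*} [Fintype V] (G : SimpleGraph V) [DecidableRel G.Adj] (v : V) :
    deg G v = G.degree v := by
  rw [deg, ← card_neighborSet_eq_degree, Nat.card_eq_fintype_card]
  rfl

lemma deg_cycleGraph {n : ℕ} (v : Fin (n + 3)) : deg (cycleGraph (n + 3)) v = 2 := by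
  rw [deg_eq_degree, cycleGraph_degree_three_le]

namespace SimpleGraph

/-- The diagonal terms vanish anyway, since `d(u, u) = 0` and `x / 0 = 0`. -/
lemma ite_eq_div_dist {V : Type*} (G : SimpleGraph V) (u v : V) [Decidable (u = v)]
    (c : ℝ) : (if u = v then 0 else c / G.dist u v) = c / G.dist u v := by
  split_ifs with h <;> simp [h]

variable {n : ℕ}

lemma cycleGraph_dist_self_add_natCast_le (u : Fin (n + 2)) (k : ℕ) :
    (cycleGraph (n + 2)).dist u (u + k) ≤ k := by
  induction k with
  | zero => simp
  | succ k ih =>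
    have hadj : (cycleGraph (n + 2)).Adj (u + k) (u + (k + 1 : ℕ)) := by
      rw [cycleGraph_adj]; right; push_cast; ring
    calc (cycleGraph (n + 2)).dist u (u + (k + 1 : ℕ))
        ≤ (cycleGraph (n + 2)).dist u (u + k)
          + (cycleGraph (n + 2)).dist (u + k) (u + (k + 1 : ℕ)) :=
          cycleGraph_connected.dist_triangle
      _ ≤ k + 1 := add_le_add ih (dist_eq_one_iff_adj.mpr hadj).le

/-- `a` forward and `b` backward steps. -/
lemma Walk.exists_sub_eq_of_cycleGraph {u v : Fin (n + 2)} (p : (cycleGraph (n + 2)).Walk u v) :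
    ∃ a b : ℕ, a + b = p.length ∧ v - u = (a : Fin (n + 2)) - b := by
  induction p with
  | nil => exact ⟨0, 0, rfl, by simp⟩
  | @cons u w v h q ih =>
    obtain ⟨a, b, hab, hq⟩ := ih
    rw [Walk.length_cons]
    rcases cycleGraph_adj.mp h with h | h
    · refine ⟨a, b + 1, by omega, ?_⟩
      rw [← sub_add_sub_cancel v w u, hq, ← neg_sub u w, h]; push_cast; ring
    · refine ⟨a + 1, b, by omega, ?_⟩
      rw [← sub_add_sub_cancel v w u, hq, h]; push_cast; ring

lemma cycleGraph_min_val_sub_le_length {u v : Fin (n + 2)} (p : (cycleGraph (n + 2)).Walk u v) :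
    min (v - u).val (u - v).val ≤ p.length := by
  obtain ⟨a, b, hab, huv⟩ := Walk.exists_sub_eq_of_cycleGraph p
  rcases le_total b a with hba | hab'
  · have : (v - u).val ≤ a - b := by
      rw [huv, ← Nat.cast_sub hba, Fin.val_natCast]
      exact Nat.mod_le _ _
    omega
  · have : (u - v).val ≤ b - a := by
      rw [← neg_sub, huv, neg_sub, ← Nat.cast_sub hab', Fin.val_natCast]
      exact Nat.mod_le _ _
    omega

theorem cycleGraph_dist (u v : Fin (n + 2)) :
    (cycleGraph (n + 2)).dist u v = min (v - u).val (u - v).val := by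
  refine le_antisymm (le_min ?_ ?_) ?_
  · simpa using cycleGraph_dist_self_add_natCast_le u (v - u).val
  · simpa [dist_comm] using cycleGraph_dist_self_add_natCast_le v (u - v).val
  · obtain ⟨p, hp⟩ := cycleGraph_connected.exists_walk_length_eq_dist u v
    exact hp ▸ cycleGraph_min_val_sub_le_length p

lemma cycleGraph_dist_self_add (u w : Fin (n + 2)) :
    (cycleGraph (n + 2)).dist u (u + w) = min w.val (n + 2 - w.val) := by
  rw [cycleGraph_dist, add_sub_cancel_left, sub_add_cancel_left, Fin.val_neg]
  split_ifs with hw <;> simp [hw]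

end SimpleGraph

lemma sum_range_min_sub {M : Type*} [AddCommMonoid M] (f : ℕ → M) (m : ℕ) :
    ∑ j ∈ range (2 * m + 1), f (min j (2 * m + 1 - j))
      = f 0 + 2 • ∑ j ∈ range m, f (j + 1) := by
  rw [show 2 * m + 1 = (m + 1) + m by ring, sum_range_add, sum_range_succ', two_nsmul]
  have h₁ : ∀ j ∈ range m, f (min (j + 1) (m + 1 + m - (j + 1))) = f (j + 1) := by
    intro j hj
    rw [min_eq_left (by rw [mem_range] at hj; omega)]
  have h₂ : ∀ j ∈ range m,
      f (min (m + 1 + j) (m + 1 + m - (m + 1 + j))) = f (m - 1 - j + 1) := by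
    intro j hj
    rw [mem_range] at hj
    congr 1
    omega
  rw [sum_congr rfl h₁, sum_congr rfl h₂, sum_range_reflect (fun j => f (j + 1))]
  simp only [Nat.sub_zero, Nat.zero_le, min_eq_left]
  abel

lemma sum_inv_cycleGraph_dist (m : ℕ) (u : Fin (2 * m + 3)) :
    ∑ v, ((cycleGraph (2 * m + 3)).dist u v : ℝ)⁻¹ = 2 * harmonicNum (m + 1) := by
  rw [← Equiv.sum_comp (Equiv.addLeft u)]
  simp only [Equiv.coe_addLeft, cycleGraph_dist_self_add]
  rw [Fin.sum_univ_eq_sum_range (fun j => ((min j (2 * m + 3 - j) : ℕ) : ℝ)⁻¹),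
    show 2 * m + 3 = 2 * (m + 1) + 1 by ring, sum_range_min_sub (fun k : ℕ => (k : ℝ)⁻¹),
    harmonicNum]
  push_cast
  simp

theorem stmt4 (n : ℕ) (hn : 3 ≤ n) (hodd : Odd n) :
    HA (SimpleGraph.cycleGraph n) = 4 * n * harmonicNum ((n - 1) / 2) := by
  obtain ⟨m, rfl⟩ : ∃ m, n = 2 * m + 3 := by
    obtain ⟨k, rfl⟩ := hodd
    exact ⟨k - 1, by omega⟩
  have hdeg (u v : Fin (2 * m + 3)) :
      deg (cycleGraph (2 * m + 3)) u + deg (cycleGraph (2 * m + 3)) v = 4 := by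
    rw [deg_cycleGraph, deg_cycleGraph]
  simp_rw [HA, hdeg, Nat.cast_ofNat, SimpleGraph.ite_eq_div_dist, div_eq_mul_inv, ← mul_sum,
    sum_inv_cycleGraph_dist, sum_const, card_univ, Fintype.card_fin, nsmul_eq_mul]
  rw [show (2 * m + 3 - 1) / 2 = m + 1 by omega]
  push_cast
  ring
end

section
/- If G is a cycle-star graph on n vertices whose cycle has length 3 and G is not isomorphic to CS_{3,n−3}, then H_A(G) < H_A(CS_{3,n−3}). -/
open Finset SimpleGraph

/-!
Every vertex off the triangle `T` of such a graph is a leaf hanging from a root `r v ∈ T`, so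
`d(u, v) = [u ∉ T] + [v ∉ T] + [r u ≠ r v]` for `u ≠ v`. Writing `H_A = ∑ᵤ deg u · ∑ᵥ 1 / d(u, v)`
and counting, `H_A = 12 + 15 s / 2 + 5 s² / 6 + (2 / 3) ∑ₓ pₓ²`, where `s = n - 3` is the number of
leaves and `pₓ` the number of leaves at `x ∈ T`. Since `∑ₓ pₓ = s`, we have `∑ₓ pₓ² ≤ s²`, with
equality exactly when all leaves hang from a single vertex, that is, when `G ≅ CS_{3,n-3}`.
-/

theorem Finset.sum_sq_lt_sq_sum {ι : Type*} {s : Finset ι} {f : ι → ℕ} {i j : ι}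
    (hi : i ∈ s) (hj : j ∈ s) (hij : i ≠ j) (hfi : 0 < f i) (hfj : 0 < f j) :
    ∑ k ∈ s, f k ^ 2 < (∑ k ∈ s, f k) ^ 2 := by
  classical
  rw [sq (∑ k ∈ s, f k), Finset.sum_mul]
  refine Finset.sum_lt_sum (fun k hk => ?_) ⟨i, hi, ?_⟩
  · rw [sq]
    exact Nat.mul_le_mul_left _ (Finset.single_le_sum (fun _ _ => Nat.zero_le _) hk)
  · have hpair : f i + f j ≤ ∑ k ∈ s, f k := by
      rw [← Finset.sum_pair hij]
      exact Finset.sum_le_sum_of_subset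
        (Finset.insert_subset hi (Finset.singleton_subset_iff.mpr hj))
    rw [sq]
    exact Nat.mul_lt_mul_of_pos_left (by omega) hfi

theorem Equiv.Perm.exists_mem_iff_and_apply_eq {α : Type*} [DecidableEq α] {s t : Finset α}
    (hst : #s = #t) {a b : α} (ha : a ∈ s) (hb : b ∈ t) :
    ∃ σ : Equiv.Perm α, (∀ v, σ v ∈ t ↔ v ∈ s) ∧ σ a = b := by
  obtain ⟨σ, hσ⟩ := Equiv.Perm.exists_map_finset_eq s t hst
  have hσt : ∀ v, σ v ∈ t ↔ v ∈ s := fun v => by simp [← hσ]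
  refine ⟨σ.trans (Equiv.swap (σ a) b), fun v => ?_, by simp⟩
  have hswap : ∀ z, Equiv.swap (σ a) b z ∈ t ↔ z ∈ t := fun z => by
    rw [Equiv.swap_apply_def]
    split_ifs with h1 h2 <;> simp_all [(hσt a).mpr ha]
  simp only [Equiv.trans_apply, hswap, hσt]

namespace SimpleGraph

variable {V : Type*} {G : SimpleGraph V}

theorem Connected.dist_eq_dist_add_one_of_adj_iff (hG : G.Connected)
    {u w v : V} (hu : ∀ x, G.Adj u x ↔ x = w) (hv : v ≠ u) :
    G.dist u v = G.dist w v + 1 := by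
  apply le_antisymm
  · calc G.dist u v ≤ G.dist u w + G.dist w v := hG.dist_triangle
      _ = G.dist w v + 1 := by rw [dist_eq_one_iff_adj.mpr ((hu w).mpr rfl), add_comm]
  · obtain ⟨p, hp⟩ := hG.exists_walk_length_eq_dist u v
    cases p with
    | nil => exact absurd rfl hv
    | cons hadj q =>
      obtain rfl := (hu _).mp hadj
      rw [← hp, Walk.length_cons]
      exact Nat.add_le_add_right (dist_le q) 1

/-- The term `v = u` vanishes because `0⁻¹ = 0`. -/
noncomputable def reciprocalStatus [Fintype V] (G : SimpleGraph V) (u : V) : ℝ :=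
  ∑ v, (G.dist u v : ℝ)⁻¹

end SimpleGraph

theorem HA_eq_sum_deg_mul_reciprocalStatus {V : Type*} [Fintype V] (G : SimpleGraph V) :
    HA G = ∑ u, (deg G u : ℝ) * G.reciprocalStatus u := by
  have hHA : HA G = 1 / 2 * ∑ u, ∑ v,
      ((deg G u : ℝ) * (G.dist u v : ℝ)⁻¹ + (deg G v : ℝ) * (G.dist v u : ℝ)⁻¹) := by
    unfold HA
    congr 1
    refine Finset.sum_congr rfl fun u _ => Finset.sum_congr rfl fun v _ => ?_
    split_ifs with h
    · simp [h]
    · rw [dist_comm]; push_cast; ring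
  have hsymm : ∑ u, ∑ v, (deg G v : ℝ) * (G.dist v u : ℝ)⁻¹
      = ∑ u, ∑ v, (deg G u : ℝ) * (G.dist u v : ℝ)⁻¹ := Finset.sum_comm
  rw [hHA]
  simp only [Finset.sum_add_distrib, hsymm, reciprocalStatus, Finset.mul_sum]
  ring

namespace SimpleGraph

variable {V : Type*} {G : SimpleGraph V}

/-- A cycle-star graph whose cycle is the triangle `T`; `r v` is the triangle vertex from which
the leaf `v` hangs. -/
structure IsTriangleWithPendants (G : SimpleGraph V) (T : Finset V) (r : V → V) : Prop where
  card_eq : #T = 3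
  root_mem : ∀ v, r v ∈ T
  root_of_mem : ∀ x ∈ T, r x = x
  adj_of_mem : ∀ x ∈ T, ∀ y ∈ T, x ≠ y → G.Adj x y
  adj_iff_of_notMem : ∀ u ∉ T, ∀ v, G.Adj u v ↔ v = r u

def pendantCount [Fintype V] [DecidableEq V] (T : Finset V) (r : V → V) (x : V) : ℕ :=
  #{v ∈ Tᶜ | r v = x}

theorem card_filter_root_ne [Fintype V] [DecidableEq V] (T : Finset V) (r : V → V) (x : V) :
    #{v ∈ Tᶜ | ¬r v = x} = #Tᶜ - pendantCount T r x := by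
  rw [pendantCount, ← card_filter_add_card_filter_not (s := Tᶜ) (fun v => r v = x)]
  omega

theorem pendantCount_root_pos [Fintype V] [DecidableEq V] {T : Finset V} {r : V → V} {u : V}
    (hu : u ∉ T) : 0 < pendantCount T r (r u) :=
  card_pos.mpr ⟨u, by simp [hu]⟩

namespace IsTriangleWithPendants

variable {T : Finset V} {r : V → V} (h : G.IsTriangleWithPendants T r)
include h

theorem nonempty : T.Nonempty := card_pos.mp (by rw [h.card_eq]; norm_num)

theorem adj_iff {u v : V} : G.Adj u v ↔ u ≠ v ∧ (u ∈ T ∧ v ∈ T ∨ r u = v ∨ r v = u) := by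
  by_cases hu : u ∈ T
  · by_cases hv : v ∈ T
    · simp only [h.root_of_mem u hu, h.root_of_mem v hv]
      exact ⟨fun hadj => ⟨hadj.ne, Or.inl ⟨hu, hv⟩⟩, fun ⟨hne, _⟩ => h.adj_of_mem u hu v hv hne⟩
    · rw [G.adj_comm, h.adj_iff_of_notMem v hv, h.root_of_mem u hu]
      constructor
      · rintro rfl; exact ⟨fun huv => hv (huv ▸ hu), Or.inr (Or.inr rfl)⟩
      · rintro ⟨-, ⟨-, hv'⟩ | huv | hvu⟩
        exacts [absurd hv' hv, absurd (huv ▸ hu) hv, hvu.symm]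
  · rw [h.adj_iff_of_notMem u hu]
    constructor
    · rintro rfl; exact ⟨fun huv => hu (huv ▸ h.root_mem u), Or.inr (Or.inl rfl)⟩
    · rintro ⟨-, ⟨hu', -⟩ | hru | hrv⟩
      exacts [absurd hu' hu, hru.symm, absurd (hrv ▸ h.root_mem v) hu]

theorem reachable_root (v : V) : G.Reachable v (r v) := by
  by_cases hv : v ∈ T
  · rw [h.root_of_mem v hv]
  · exact ((h.adj_iff_of_notMem v hv (r v)).mpr rfl).reachable

theorem connected : G.Connected := by
  have : Nonempty V := ⟨h.nonempty.choose⟩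
  refine Connected.mk fun u v =>
    (h.reachable_root u).trans (Reachable.trans ?_ (h.reachable_root v).symm)
  by_cases huv : r u = r v
  · rw [huv]
  · exact (h.adj_of_mem _ (h.root_mem u) _ (h.root_mem v) huv).reachable

theorem dist_of_notMem {u v : V} (hu : u ∉ T) (hv : v ≠ u) : G.dist u v = G.dist (r u) v + 1 :=
  h.connected.dist_eq_dist_add_one_of_adj_iff (h.adj_iff_of_notMem u hu) hv

theorem dist_of_mem [DecidableEq V] {x : V} (hx : x ∈ T) (v : V) :
    G.dist x v = (if v ∈ T then 0 else 1) + (if r v = x then 0 else 1) := by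
  have hT : ∀ y ∈ T, G.dist x y = if y = x then 0 else 1 := fun y hy => by
    split_ifs with hyx
    · rw [hyx, dist_self]
    · exact dist_eq_one_iff_adj.mpr (h.adj_of_mem x hx y hy (Ne.symm hyx))
  by_cases hv : v ∈ T
  · simp [hT v hv, h.root_of_mem v hv, hv]
  · rw [dist_comm, h.dist_of_notMem hv (fun hxv => hv (hxv ▸ hx)), dist_comm,
      hT _ (h.root_mem v)]
    simp [hv, add_comm]

theorem deg_of_notMem [Fintype V] {u : V} (hu : u ∉ T) : deg G u = 1 := by
  rw [deg, Nat.card_congr (Equiv.subtypeEquivRight (h.adj_iff_of_notMem u hu))]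
  simp

theorem nonempty_iso [DecidableEq V] {G' : SimpleGraph V} {T' : Finset V} {r' : V → V}
    (h' : G'.IsTriangleWithPendants T' r') {x x' : V} (hx : x ∈ T) (hrx : ∀ v ∉ T, r v = x)
    (hx' : x' ∈ T') (hrx' : ∀ v ∉ T', r' v = x') : Nonempty (G ≃g G') := by
  obtain ⟨σ, hσT, hσx⟩ :=
    Equiv.Perm.exists_mem_iff_and_apply_eq (h.card_eq.trans h'.card_eq.symm) hx hx'
  have hσr : ∀ v, r' (σ v) = σ (r v) := fun v => by
    by_cases hv : v ∈ T
    · rw [h'.root_of_mem _ ((hσT v).mpr hv), h.root_of_mem v hv]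
    · rw [hrx' _ (fun h'' => hv ((hσT v).mp h'')), hrx v hv, hσx]
  refine ⟨⟨σ, fun {u v} => ?_⟩⟩
  simp only [h'.adj_iff, h.adj_iff, hσT, hσr, σ.injective.ne_iff, σ.injective.eq_iff]

section Fintype

variable [Fintype V] [DecidableEq V]

theorem deg_of_mem {x : V} (hx : x ∈ T) : deg G x = pendantCount T r x + 2 := by
  classical
  have hnbr : ({w | G.Adj x w} : Finset V) = {v ∈ Tᶜ | r v = x} ∪ T.erase x := by
    ext v
    by_cases hv : v ∈ T
    · simp [h.adj_iff, h.root_of_mem x hx, h.root_of_mem v hv, hv, hx, eq_comm]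
    · have hxv : x ≠ v := fun hxv => hv (hxv ▸ hx)
      simp [h.adj_iff, h.root_of_mem x hx, hv, hxv]
  rw [deg, Nat.card_eq_fintype_card, Fintype.card_subtype, hnbr,
    card_union_of_disjoint (Finset.disjoint_left.mpr fun v hv hv' => by
      simp only [mem_filter, mem_compl, mem_erase] at hv hv'; exact hv.1 hv'.2),
    card_erase_of_mem hx, h.card_eq, pendantCount]

theorem reciprocalStatus_of_mem {x : V} (hx : x ∈ T) :
    G.reciprocalStatus x =
      2 + pendantCount T r x + ((#Tᶜ : ℝ) - pendantCount T r x) / 2 := by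
  have hle : pendantCount T r x ≤ #Tᶜ := card_filter_le _ _
  have htri : ∀ v ∈ T.erase x, (G.dist x v : ℝ)⁻¹ = 1 := fun v hv => by
    rw [mem_erase] at hv
    simp [h.dist_of_mem hx, hv.2, h.root_of_mem v hv.2, hv.1]
  have hown : ∀ v ∈ ({v ∈ Tᶜ | r v = x} : Finset V), (G.dist x v : ℝ)⁻¹ = 1 := fun v hv => by
    rw [mem_filter, mem_compl] at hv
    simp [h.dist_of_mem hx, hv.1, hv.2]
  have hother : ∀ v ∈ ({v ∈ Tᶜ | ¬r v = x} : Finset V), (G.dist x v : ℝ)⁻¹ = 1 / 2 :=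
    fun v hv => by
      rw [mem_filter, mem_compl] at hv
      simp [h.dist_of_mem hx, hv.1, hv.2, one_add_one_eq_two]
  rw [reciprocalStatus, ← sum_add_sum_compl T, ← add_sum_erase T _ hx,
    ← sum_filter_add_sum_filter_not Tᶜ (fun v => r v = x), sum_eq_card_nsmul htri,
    sum_eq_card_nsmul hown, sum_eq_card_nsmul hother, card_erase_of_mem hx, h.card_eq,
    card_filter_root_ne, ← pendantCount]
  simp only [dist_self, Nat.cast_zero, inv_zero, nsmul_eq_mul, Nat.cast_sub hle]
  ring

theorem reciprocalStatus_of_notMem {u : V} (hu : u ∉ T) :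
    G.reciprocalStatus u =
      2 + ((pendantCount T r (r u) : ℝ) - 1) / 2 + ((#Tᶜ : ℝ) - pendantCount T r (r u)) / 3 := by
  set y := r u
  have hy : y ∈ T := h.root_mem u
  have hle : pendantCount T r y ≤ #Tᶜ := card_filter_le _ _
  have hu' : u ∈ ({v ∈ Tᶜ | r v = y} : Finset V) := by simp [hu, y]
  have hpos : 1 ≤ pendantCount T r y := pendantCount_root_pos hu
  have hdist : ∀ v ≠ u, G.dist u v = G.dist y v + 1 := fun v hv => h.dist_of_notMem hu hv
  have hroot : (G.dist u y : ℝ)⁻¹ = 1 := by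
    simp [hdist y (fun h' => hu (h' ▸ hy))]
  have htri : ∀ v ∈ T.erase y, (G.dist u v : ℝ)⁻¹ = 1 / 2 := fun v hv => by
    rw [mem_erase] at hv
    simp [hdist v (fun h' => hu (h' ▸ hv.2)), h.dist_of_mem hy, hv.2, h.root_of_mem v hv.2,
      hv.1, one_add_one_eq_two]
  have hsibling : ∀ v ∈ ({v ∈ Tᶜ | r v = y} : Finset V).erase u, (G.dist u v : ℝ)⁻¹ = 1 / 2 :=
    fun v hv => by
      rw [mem_erase, mem_filter, mem_compl] at hv
      simp [hdist v hv.1, h.dist_of_mem hy, hv.2.1, hv.2.2, one_add_one_eq_two]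
  have hother : ∀ v ∈ ({v ∈ Tᶜ | ¬r v = y} : Finset V), (G.dist u v : ℝ)⁻¹ = 1 / 3 :=
    fun v hv => by
      rw [mem_filter, mem_compl] at hv
      have hvu : v ≠ u := fun h' => hv.2 (h' ▸ rfl)
      simp [hdist v hvu, h.dist_of_mem hy, hv.1, hv.2]
  rw [reciprocalStatus, ← sum_add_sum_compl T, ← add_sum_erase T _ hy,
    ← sum_filter_add_sum_filter_not Tᶜ (fun v => r v = y), ← add_sum_erase _ _ hu', hroot,
    sum_eq_card_nsmul htri, sum_eq_card_nsmul hsibling, sum_eq_card_nsmul hother,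
    card_erase_of_mem hy, h.card_eq, card_erase_of_mem hu', card_filter_root_ne, ← pendantCount]
  simp only [dist_self, Nat.cast_zero, inv_zero, nsmul_eq_mul, Nat.cast_sub hle, Nat.cast_sub hpos]
  ring

theorem sum_pendantCount : ∑ x ∈ T, pendantCount T r x = #Tᶜ :=
  (card_eq_sum_card_fiberwise fun v _ => h.root_mem v).symm

theorem sum_compl_comp_root (g : V → ℝ) :
    ∑ u ∈ Tᶜ, g (r u) = ∑ x ∈ T, pendantCount T r x * g x := by
  rw [← sum_fiberwise_of_maps_to (fun u _ => h.root_mem u)]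
  refine sum_congr rfl fun x _ => ?_
  rw [sum_congr rfl fun u hu => by rw [(mem_filter.mp hu).2], sum_const, nsmul_eq_mul,
    pendantCount]

theorem HA_eq :
    HA G = 12 + 15 / 2 * (#Tᶜ : ℝ) + 5 / 6 * (#Tᶜ : ℝ) ^ 2
      + 2 / 3 * ∑ x ∈ T, (pendantCount T r x : ℝ) ^ 2 := by
  have hsum : ∑ x ∈ T, (pendantCount T r x : ℝ) = #Tᶜ := by exact_mod_cast h.sum_pendantCount
  set s : ℝ := ((#Tᶜ : ℕ) : ℝ)
  set p : V → ℝ := fun x => ((pendantCount T r x : ℕ) : ℝ)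
  calc HA G = ∑ x ∈ T, (deg G x : ℝ) * G.reciprocalStatus x
        + ∑ u ∈ Tᶜ, (deg G u : ℝ) * G.reciprocalStatus u := by
        rw [HA_eq_sum_deg_mul_reciprocalStatus, sum_add_sum_compl]
    _ = ∑ x ∈ T, (p x + 2) * (2 + p x + (s - p x) / 2)
        + ∑ x ∈ T, p x * (2 + (p x - 1) / 2 + (s - p x) / 3) := by
        congr 1
        · refine sum_congr rfl fun x hx => ?_
          rw [h.deg_of_mem hx, h.reciprocalStatus_of_mem hx]
          push_cast
          rfl
        · rw [← h.sum_compl_comp_root fun x => 2 + (p x - 1) / 2 + (s - p x) / 3]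
          refine sum_congr rfl fun u hu => ?_
          rw [mem_compl] at hu
          rw [h.deg_of_notMem hu, h.reciprocalStatus_of_notMem hu, Nat.cast_one, one_mul]
    _ = ∑ x ∈ T, ((4 + s) + (9 / 2 + 5 / 6 * s) * p x + 2 / 3 * p x ^ 2) := by
        rw [← sum_add_distrib]
        exact sum_congr rfl fun x _ => by ring
    _ = 12 + 15 / 2 * s + 5 / 6 * s ^ 2 + 2 / 3 * ∑ x ∈ T, p x ^ 2 := by
        rw [sum_add_distrib, sum_add_distrib, sum_const, ← mul_sum, ← mul_sum, hsum, h.card_eq]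
        simp only [nsmul_eq_mul, Nat.cast_ofNat]
        ring

theorem HA_eq_of_root_eq {x : V} (hx : x ∈ T) (hrx : ∀ v ∉ T, r v = x) :
    HA G = 12 + 15 / 2 * (#Tᶜ : ℝ) + 3 / 2 * (#Tᶜ : ℝ) ^ 2 := by
  have hzero : ∀ y ∈ T, y ≠ x → pendantCount T r y ^ 2 = 0 := fun y _ hyx => by
    rw [pendantCount, card_eq_zero.mpr (filter_eq_empty_iff.mpr fun v hv => by
      rw [hrx v (mem_compl.mp hv)]; exact hyx.symm), zero_pow two_ne_zero]
  have hall : pendantCount T r x = #Tᶜ :=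
    congrArg card (filter_true_of_mem fun v hv => hrx v (mem_compl.mp hv))
  have hsq : ∑ y ∈ T, pendantCount T r y ^ 2 = #Tᶜ ^ 2 := by
    rw [sum_eq_single_of_mem x hx hzero, hall]
  rw [h.HA_eq]
  rw [show ∑ y ∈ T, (pendantCount T r y : ℝ) ^ 2 = (#Tᶜ : ℝ) ^ 2 by exact_mod_cast hsq]
  ring

theorem HA_lt_of_root_ne {u v : V} (hu : u ∉ T) (hv : v ∉ T) (huv : r u ≠ r v) :
    HA G < 12 + 15 / 2 * (#Tᶜ : ℝ) + 3 / 2 * (#Tᶜ : ℝ) ^ 2 := by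
  have hsq : ∑ y ∈ T, pendantCount T r y ^ 2 < #Tᶜ ^ 2 := by
    rw [← h.sum_pendantCount]
    exact sum_sq_lt_sq_sum (h.root_mem u) (h.root_mem v) huv (pendantCount_root_pos hu)
      (pendantCount_root_pos hv)
  have hsq' : ∑ y ∈ T, (pendantCount T r y : ℝ) ^ 2 < (#Tᶜ : ℝ) ^ 2 := by exact_mod_cast hsq
  rw [h.HA_eq]
  linarith

end Fintype

end IsTriangleWithPendants

end SimpleGraph

section CycleStar

variable {V : Type*} {G : SimpleGraph V}

theorem OnCycle.of_mem_support {u v : V} {p : G.Walk u u} (hp : p.IsCycle) (hv : v ∈ p.support) :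
    OnCycle G v := by
  classical
  exact ⟨p.rotate v hv, hp.rotate hv⟩

theorem onCycle_of_adj {a b c : V} (hab : G.Adj a b) (hbc : G.Adj b c) (hca : G.Adj c a) :
    OnCycle G a :=
  ⟨.cons hab (.cons hbc (.cons hca .nil)), by
    simp [Walk.isCycle_def, hab.ne, hbc.ne, hca.ne, hab.ne.symm, hca.ne.symm]⟩

theorem SimpleGraph.Walk.IsCycle.length_le_card {u : V} {p : G.Walk u u} (hp : p.IsCycle)
    {T : Finset V} (hT : ∀ v ∈ p.support, v ∈ T) : p.length ≤ #T := by
  classical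
  calc p.length = p.support.tail.length := by simp [Walk.length_support]
    _ = #p.support.tail.toFinset := (List.toFinset_card_of_nodup hp.support_nodup).symm
    _ ≤ #T := card_le_card fun v hv => hT v (List.mem_of_mem_tail (List.mem_toFinset.mp hv))

theorem isNClique_three_of_onCycle_iff {T : Finset V} (hT : ∀ v, v ∈ T ↔ OnCycle G v)
    (h3 : #T = 3) : G.IsNClique 3 T := by
  classical
  obtain ⟨a, ha⟩ := card_pos.mp (by rw [h3]; norm_num : 0 < #T)
  obtain ⟨p, hp⟩ := (hT a).mp ha
  have hlen : p.length = 3 := le_antisymm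
    (h3 ▸ hp.length_le_card fun v hv => (hT v).mpr (OnCycle.of_mem_support hp hv))
    hp.three_le_length
  obtain ⟨s, hs⟩ := is3Clique_iff_exists_cycle_length_three.mpr ⟨a, p, hp, hlen⟩
  obtain ⟨x, y, z, hxy, hxz, hyz, rfl⟩ := is3Clique_iff.mp hs
  have hsub : ({x, y, z} : Finset V) ⊆ T := by
    intro v hv
    simp only [mem_insert, mem_singleton] at hv
    rw [hT]
    rcases hv with rfl | rfl | rfl
    exacts [onCycle_of_adj hxy hyz hxz.symm, onCycle_of_adj hyz hxz.symm hxy,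
      onCycle_of_adj hxz.symm hxy hyz]
  rwa [← eq_of_subset_of_card_le hsub (by rw [h3, hs.card_eq])]

theorem IsCycleStar.exists_adj_iff_of_not_onCycle [Fintype V] (hG : IsCycleStar G) {a : V}
    (ha : OnCycle G a) {v : V} (hv : ¬OnCycle G v) : ∃ w, OnCycle G w ∧ ∀ x, G.Adj v x ↔ x = w := by
  obtain ⟨⟨hconn, -⟩, hstar⟩ := hG
  have hleaf : ∀ u, ¬OnCycle G u → ∃ w, ∀ x, G.Adj u x ↔ x = w := by
    intro u hu
    have : Subsingleton {x // G.Adj u x} := Finite.card_le_one_iff_subsingleton.mp <| by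
      by_contra h
      exact hu (hstar u (by rw [deg]; omega))
    obtain ⟨w, hw⟩ : ∃ w, G.Adj u w := by
      obtain ⟨q⟩ := hconn.preconnected u a
      cases q with
      | nil => exact absurd ha hu
      | cons hadj _ => exact ⟨_, hadj⟩
    exact ⟨w, fun x => ⟨fun hx => congrArg Subtype.val (Subsingleton.elim ⟨x, hx⟩ ⟨w, hw⟩),
      fun hx => hx ▸ hw⟩⟩
  obtain ⟨w, hw⟩ := hleaf v hv
  refine ⟨w, by_contra fun hw' => ?_, hw⟩
  -- otherwise the edge `vw` would be a whole connected component
  obtain ⟨z, hz⟩ := hleaf w hw'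
  have hzv : v = z := (hz v).mp ((hw w).mpr rfl).symm
  subst hzv
  have hclosed : ∀ y, G.Reachable v y → y = v ∨ y = w := by
    intro y hy
    replace hy := (reachable_iff_reflTransGen v y).mp hy
    induction hy with
    | refl => exact Or.inl rfl
    | tail _ hadj ih =>
      rcases ih with rfl | rfl
      exacts [Or.inr ((hw _).mp hadj), Or.inl ((hz _).mp hadj)]
  rcases hclosed a (hconn.preconnected v a) with rfl | rfl
  exacts [hv ha, hw' ha]

theorem IsCycleStar.exists_isTriangleWithPendants [Fintype V] (hG : IsCycleStar G)
    (hc : cycleLength G = 3) : ∃ T r, G.IsTriangleWithPendants T r := by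
  classical
  set T : Finset V := {v | OnCycle G v}
  have hT : ∀ v, v ∈ T ↔ OnCycle G v := by simp [T]
  have h3 : #T = 3 := by
    rw [← hc, cycleLength, Nat.card_eq_fintype_card, Fintype.card_subtype]
  have hclique := isNClique_three_of_onCycle_iff hT h3
  obtain ⟨a, ha⟩ := card_pos.mp (by rw [h3]; norm_num : 0 < #T)
  have hroot : ∀ v, ∃ w ∈ T, (v ∈ T → w = v) ∧ (v ∉ T → ∀ x, G.Adj v x ↔ x = w) := by
    intro v
    by_cases hv : v ∈ T
    · exact ⟨v, hv, fun _ => rfl, absurd hv⟩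
    · obtain ⟨w, hw, hadj⟩ := hG.exists_adj_iff_of_not_onCycle ((hT a).mp ha) ((hT v).not.mp hv)
      exact ⟨w, (hT w).mpr hw, (absurd · hv), fun _ => hadj⟩
  choose r hrT hr using hroot
  exact ⟨T, r, h3, hrT, fun x hx => (hr x).1 hx,
    fun x hx y hy hxy => hclique.isClique hx hy hxy, fun u hu => (hr u).2 hu⟩

end CycleStar

theorem isTriangleWithPendants_cycleStar3 {n : ℕ} (hn : 3 ≤ n) :
    (cycleStar3 n).IsTriangleWithPendants {i | (i : ℕ) < 3}
      (fun i => if (i : ℕ) < 3 then i else ⟨0, by omega⟩) where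
  card_eq := by simp [Fin.card_filter_val_lt, hn]
  root_mem i := by split_ifs with hi <;> simp [hi]
  root_of_mem i hi := by simp_all
  adj_of_mem i hi j hj hij := by simp_all [cycleStar3]
  adj_iff_of_notMem i hi j := by
    simp only [mem_filter, mem_univ, true_and] at hi
    simp only [cycleStar3, fromRel_adj, ne_eq, Fin.ext_iff, hi, false_and, false_or, and_false,
      ↓reduceIte]
    omega

theorem stmt14 (n : ℕ) (G : SimpleGraph (Fin n)) (hG : IsCycleStar G)
    (hc : cycleLength G = 3) (hne : ¬ Nonempty (G ≃g cycleStar3 n)) :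
    HA G < HA (cycleStar3 n) := by
  obtain ⟨T, r, hT⟩ := hG.exists_isTriangleWithPendants hc
  have hn : 3 ≤ n := by simpa [hT.card_eq] using T.card_le_univ
  have hCS := isTriangleWithPendants_cycleStar3 hn
  have hcompl : #Tᶜ = #({i | (i : ℕ) < 3} : Finset (Fin n))ᶜ := by
    rw [card_compl, card_compl, hT.card_eq, hCS.card_eq]
  rw [hCS.HA_eq_of_root_eq (x := ⟨0, by omega⟩) (by simp) (fun v hv => by simp_all), ← hcompl]
  obtain ⟨x, hx⟩ := hT.nonempty
  by_cases hsingle : ∃ x ∈ T, ∀ v ∉ T, r v = x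
  · obtain ⟨x, hx, hrx⟩ := hsingle
    exact absurd (hT.nonempty_iso hCS hx hrx (x' := ⟨0, by omega⟩) (by simp)
      (fun v hv => by simp_all)) hne
  · push Not at hsingle
    obtain ⟨u, hu, -⟩ := hsingle x hx
    obtain ⟨v, hv, hvu⟩ := hsingle (r u) (hT.root_mem u)
    exact hT.HA_lt_of_root_ne hu hv (Ne.symm hvu)
end
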